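/- arXiv:1509.05902 — 2 statements merged into one kernel-verified Lean document; each statement's English description precedes it below -/
import Mathlib

section
/- Let A, B, C be n×n Hermitian positive definite matrices such that the eigenvalues of AC^{−1} are E-dominated by those of BC^{−1}, i.e., e_k(λ(AC^{−1})) ≤ e_k(λ(BC^{−1})) for k = 1,…,n−1 and det(AC^{−1}) = det(BC^{−1}). Then δ_R(A,C) ≤ δ_R(B,C), where δ_R(X,Y) = ‖log(Y^{−1/2} X Y^{−1/2})‖_F is the affine-invariant Riemannian distance on positive definite matrices. -/
/-!
For `x > 0` one has `(log x)² = ∫₀^∞ (log (t + x) + log (t + x⁻¹) - 2 log (t + 1)) dt / t`: both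
sides vanish at `x = 1`, and differentiating under the integral sign gives `2 log x / x` for both.
Summing over the eigenvalues `λᵢ` of `C^{-1/2} A C^{-1/2}`, the integrand becomes
`log ∏ (λᵢ + t) + log ∏ (λᵢ⁻¹ + t)` up to a term not depending on `A`. Expanding
`∏ (λᵢ + t) = ∑ₖ eₖ(λ) tⁿ⁻ᵏ`, E-domination together with equality of determinants makes both
products monotone in the passage from `A` to `B` (for the inverses through
`∏ (λᵢ⁻¹ + t) = tⁿ ∏ (λᵢ + t⁻¹) / ∏ λᵢ`), hence the integrals are ordered.
-/

open Finset Real Matrix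
open scoped ComplexOrder

noncomputable def esymm (n k : ℕ) (x : Fin n → ℝ) : ℝ :=
  ∑ s ∈ Finset.powersetCard k (Finset.univ : Finset (Fin n)), ∏ i ∈ s, x i

/-- The square root of a positive semidefinite matrix, as `Matrix.PosSemidef.sqrt` was defined in
Mathlib (removed since). -/
noncomputable def Matrix.PosSemidef.sqrt {m : Type*} [Fintype m] [DecidableEq m] {𝕜 : Type*} [RCLike 𝕜]
    {M : Matrix m m 𝕜} (hM : M.PosSemidef) : Matrix m m 𝕜 :=
  hM.1.eigenvectorUnitary.1 * diagonal ((↑) ∘ (√·) ∘ hM.1.eigenvalues) *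
    (star hM.1.eigenvectorUnitary : Matrix m m 𝕜)

section Esymm

variable {n : ℕ}

lemma esymm_zero (x : Fin n → ℝ) : esymm n 0 x = 1 := by
  simp [esymm]

lemma esymm_self (x : Fin n → ℝ) : esymm n n x = ∏ i, x i := by
  have : powersetCard n (univ : Finset (Fin n)) = {univ} := by
    simpa using powersetCard_self (univ : Finset (Fin n))
  rw [esymm, this, sum_singleton]

lemma prod_add_eq_sum_esymm_mul_pow (x : Fin n → ℝ) (t : ℝ) :
    ∏ i, (x i + t) = ∑ k ∈ range (n + 1), esymm n k x * t ^ (n - k) := by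
  rw [prod_add, sum_powerset, card_univ, Fintype.card_fin]
  refine sum_congr rfl fun k _ => ?_
  rw [esymm, sum_mul]
  refine sum_congr rfl fun s hs => ?_
  rw [prod_const, card_sdiff_of_subset (subset_univ s), (mem_powersetCard.mp hs).2, card_univ,
    Fintype.card_fin]

variable {a b : Fin n → ℝ}

lemma prod_add_le_prod_add_of_esymm_le (hE : ∀ k, 1 ≤ k → k ≤ n - 1 → esymm n k a ≤ esymm n k b)
    (hprod : ∏ i, a i = ∏ i, b i) {t : ℝ} (ht : 0 ≤ t) :
    ∏ i, (a i + t) ≤ ∏ i, (b i + t) := by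
  rw [prod_add_eq_sum_esymm_mul_pow, prod_add_eq_sum_esymm_mul_pow]
  refine sum_le_sum fun k hk => ?_
  obtain rfl | hk0 := Nat.eq_zero_or_pos k
  · rw [esymm_zero, esymm_zero]
  obtain rfl | hkn := eq_or_ne k n
  · rw [esymm_self, esymm_self, hprod]
  have := mem_range.mp hk
  exact mul_le_mul_of_nonneg_right (hE k hk0 (by omega)) (pow_nonneg ht _)

lemma prod_inv_add_eq_pow_mul_prod_add_inv_div {x : Fin n → ℝ} (hx : ∀ i, x i ≠ 0) {t : ℝ}
    (ht : t ≠ 0) : ∏ i, ((x i)⁻¹ + t) = t ^ n * (∏ i, (x i + t⁻¹)) / ∏ i, x i := by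
  have h : ∀ i, (x i)⁻¹ + t = t * (x i + t⁻¹) / x i := fun i => by field_simp [hx i]; ring
  rw [prod_congr rfl fun i _ => h i, prod_div_distrib, prod_mul_distrib, prod_const, card_univ,
    Fintype.card_fin]

lemma prod_inv_add_le_prod_inv_add_of_esymm_le (ha : ∀ i, 0 < a i) (hb : ∀ i, 0 < b i)
    (hE : ∀ k, 1 ≤ k → k ≤ n - 1 → esymm n k a ≤ esymm n k b)
    (hprod : ∏ i, a i = ∏ i, b i) {t : ℝ} (ht : 0 ≤ t) :
    ∏ i, ((a i)⁻¹ + t) ≤ ∏ i, ((b i)⁻¹ + t) := by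
  obtain rfl | ht := ht.eq_or_lt
  · simp only [add_zero, prod_inv_distrib, hprod, le_refl]
  rw [prod_inv_add_eq_pow_mul_prod_add_inv_div (fun i => (ha i).ne') ht.ne',
    prod_inv_add_eq_pow_mul_prod_add_inv_div (fun i => (hb i).ne') ht.ne', hprod]
  have := prod_add_le_prod_add_of_esymm_le hE hprod (inv_pos.2 ht).le
  have := prod_pos fun i (_ : i ∈ univ) => hb i
  gcongr t ^ n * ?_ / _

end Esymm

namespace Matrix

variable {m 𝕜 : Type*} [Fintype m] [DecidableEq m] [RCLike 𝕜]

lemma PosSemidef.posSemidef_sqrt {M : Matrix m m 𝕜} (hM : M.PosSemidef) : hM.sqrt.PosSemidef := by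
  have hD : (diagonal ((↑) ∘ (√·) ∘ hM.1.eigenvalues) : Matrix m m 𝕜).PosSemidef :=
    PosSemidef.diagonal fun i => RCLike.ofReal_nonneg.mpr (Real.sqrt_nonneg _)
  simpa [sqrt, star_eq_conjTranspose] using hD.mul_mul_conjTranspose_same hM.1.eigenvectorUnitary.1

lemma PosSemidef.sqrt_mul_self {M : Matrix m m 𝕜} (hM : M.PosSemidef) : hM.sqrt * hM.sqrt = M := by
  set U : Matrix m m 𝕜 := hM.1.eigenvectorUnitary.1
  set D : Matrix m m 𝕜 := diagonal ((↑) ∘ (√·) ∘ hM.1.eigenvalues)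
  have hDD : D * D = diagonal (RCLike.ofReal ∘ hM.1.eigenvalues) := by
    rw [diagonal_mul_diagonal]
    congr 1 with i
    simp [← RCLike.ofReal_mul, Real.mul_self_sqrt (hM.eigenvalues_nonneg i)]
  calc hM.sqrt * hM.sqrt = U * D * (star U * U) * D * star U := by
        simp only [sqrt, Matrix.mul_assoc]; rfl
    _ = M := by
      rw [Unitary.coe_star_mul_self, Matrix.mul_one, Matrix.mul_assoc U, hDD]
      conv_rhs => rw [hM.1.spectral_theorem, Unitary.conjStarAlgAut_apply]

lemma PosDef.posDef_sqrt_mul_mul_sqrt {P M : Matrix m m 𝕜} (hP : P.PosDef) (hM : M.PosDef) :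
    (hP.posSemidef.sqrt * M * hP.posSemidef.sqrt).PosDef := by
  set S := hP.posSemidef.sqrt
  have hS : IsUnit S :=
    isUnit_of_mul_isUnit_left (hP.posSemidef.sqrt_mul_self ▸ hP.isUnit : IsUnit (S * S))
  have := hM.conjTranspose_mul_mul_same (mulVec_injective_iff_isUnit.mpr hS)
  rwa [hP.posSemidef.posSemidef_sqrt.1] at this

lemma PosSemidef.det_sqrt_mul_mul_sqrt {P : Matrix m m 𝕜} (hP : P.PosSemidef) (M : Matrix m m 𝕜) :
    (hP.sqrt * M * hP.sqrt).det = (M * P).det := by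
  conv_rhs => rw [← hP.sqrt_mul_self]
  simp only [det_mul]
  ring

end Matrix

section LogSqKernel

open MeasureTheory Set Filter
open scoped Topology

noncomputable def logSqKernel (x t : ℝ) : ℝ :=
  (log (t + x) + log (t + x⁻¹) - 2 * log (t + 1)) / t

noncomputable def logSqKernelDeriv (x t : ℝ) : ℝ :=
  (x ^ 2 - 1) / (x * (t + x) * (x * t + 1))

variable {x t : ℝ}

lemma logSqKernel_eq_log_one_add (hx : 0 < x) (ht : 0 < t) :
    logSqKernel x t = log (1 + (x + x⁻¹ - 2) * t / (t + 1) ^ 2) / t := by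
  have hprod : (t + x) * (t + x⁻¹) = (1 + (x + x⁻¹ - 2) * t / (t + 1) ^ 2) * (t + 1) ^ 2 := by
    field_simp
    ring
  have hlog2 : 2 * log (t + 1) = log ((t + 1) ^ 2) := by rw [log_pow, Nat.cast_ofNat]
  rw [logSqKernel, ← log_mul (by positivity) (by positivity), hlog2,
    ← log_div (by positivity) (by positivity), hprod, mul_div_cancel_right₀ _ (by positivity)]

lemma two_le_add_inv (hx : 0 < x) : 2 ≤ x + x⁻¹ := by
  have : x + x⁻¹ - 2 = (x - 1) ^ 2 / x := by field_simp; ring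
  linarith [show 0 ≤ (x - 1) ^ 2 / x by positivity]

lemma logSqKernel_nonneg (hx : 0 < x) (ht : 0 < t) : 0 ≤ logSqKernel x t := by
  have := two_le_add_inv hx
  rw [logSqKernel_eq_log_one_add hx ht]
  exact div_nonneg (log_nonneg (by simp only [le_add_iff_nonneg_right]; positivity)) ht.le

lemma logSqKernel_le (hx : 0 < x) (ht : 0 < t) :
    logSqKernel x t ≤ (x + x⁻¹ - 2) * ((t + 1) ^ 2)⁻¹ := by
  have := two_le_add_inv hx
  rw [logSqKernel_eq_log_one_add hx ht, div_le_iff₀ ht]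
  calc _ ≤ (x + x⁻¹ - 2) * t / (t + 1) ^ 2 := by
        have : 0 < 1 + (x + x⁻¹ - 2) * t / (t + 1) ^ 2 := by positivity
        linarith [log_le_sub_one_of_pos this]
    _ = _ := by field_simp

lemma continuousOn_logSqKernel (hx : 0 < x) : ContinuousOn (logSqKernel x) (Ioi 0) := by
  intro t (ht : 0 < t)
  refine ContinuousAt.continuousWithinAt ?_
  unfold logSqKernel
  fun_prop (disch := positivity)

lemma integrableOn_inv_add_sq {c : ℝ} (hc : 0 < c) :
    IntegrableOn (fun t : ℝ => ((t + c) ^ 2)⁻¹) (Ioi 0) := by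
  refine (integrableOn_add_rpow_Ioi_of_lt (a := -2) (by norm_num) (neg_lt_zero.2 hc)).congr_fun
    (fun t (ht : 0 < t) => ?_) measurableSet_Ioi
  change (t + c) ^ (-2 : ℝ) = _
  rw [rpow_neg (by positivity), rpow_two]

lemma integrableOn_logSqKernel (hx : 0 < x) : IntegrableOn (logSqKernel x) (Ioi 0) := by
  refine Integrable.mono' ((integrableOn_inv_add_sq one_pos).const_mul (x + x⁻¹ - 2))
    ((continuousOn_logSqKernel hx).aestronglyMeasurable measurableSet_Ioi) ?_
  filter_upwards [ae_restrict_mem measurableSet_Ioi] with t (ht : 0 < t)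
  rw [norm_of_nonneg (logSqKernel_nonneg hx ht)]
  exact logSqKernel_le hx ht

lemma hasDerivAt_logSqKernel (hx : 0 < x) (ht : 0 < t) :
    HasDerivAt (logSqKernel · t) (logSqKernelDeriv x t) x := by
  have h1 := ((hasDerivAt_id x).const_add t).log (by positivity)
  have h2 := ((hasDerivAt_inv hx.ne').const_add t).log (by positivity)
  refine (((h1.add h2).sub_const (2 * log (t + 1))).div_const t).congr_deriv ?_
  simp only [logSqKernelDeriv, id]
  field_simp
  ring

lemma abs_logSqKernelDeriv_le {δ M : ℝ} (hδ : 0 < δ) (hδx : δ < x) (hxM : x < M) (ht : 0 < t) :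
    |logSqKernelDeriv x t| ≤ (M ^ 2 + 1) / δ ^ 2 * ((t + min δ δ⁻¹) ^ 2)⁻¹ := by
  have hx : 0 < x := hδ.trans hδx
  have h1 : δ * (t + min δ δ⁻¹) ≤ x * (t + x) := by
    nlinarith [min_le_left δ δ⁻¹]
  have h2 : δ * (t + min δ δ⁻¹) ≤ x * t + 1 := by
    have : δ * δ⁻¹ = 1 := mul_inv_cancel₀ hδ.ne'
    nlinarith [min_le_right δ δ⁻¹]
  have hnum : |x ^ 2 - 1| ≤ M ^ 2 + 1 := by
    rw [abs_le]; constructor <;> nlinarith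
  rw [logSqKernelDeriv, abs_div, abs_of_pos (a := x * (t + x) * (x * t + 1)) (by positivity)]
  calc _ ≤ (M ^ 2 + 1) / (δ * (t + min δ δ⁻¹) * (δ * (t + min δ δ⁻¹))) :=
        div_le_div₀ (by positivity) hnum (by positivity)
          (mul_le_mul h1 h2 (by positivity) (by positivity))
    _ = _ := by field_simp

lemma integral_logSqKernelDeriv (hx : 0 < x) (hint : IntegrableOn (logSqKernelDeriv x) (Ioi 0)) :
    ∫ t in Ioi 0, logSqKernelDeriv x t = 2 * log x / x := by
  have hderiv : ∀ t ∈ Set.Ici 0, HasDerivAt (fun t => (log (x * t + 1) - log (t + x)) / x)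
      (logSqKernelDeriv x t) t := by
    intro t (ht : 0 ≤ t)
    have h1 := (((hasDerivAt_id t).const_mul x).add_const 1).log (by positivity)
    have h2 := ((hasDerivAt_id t).add_const x).log (by positivity)
    refine ((h1.sub h2).div_const x).congr_deriv ?_
    simp only [logSqKernelDeriv, id]
    field_simp
    ring
  have hratio : Tendsto (fun t => (x * t + 1) / (t + x)) atTop (𝓝 x) := by
    have := (tendsto_const_nhds (x := 1 - x ^ 2)).div_atTop
      (tendsto_atTop_add_const_right _ x tendsto_id)
    refine (by simpa using this.const_add x : Tendsto _ _ (𝓝 x)).congr' ?_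
    filter_upwards [eventually_gt_atTop 0] with t ht
    field_simp
    ring
  have hlim : Tendsto (fun t => (log (x * t + 1) - log (t + x)) / x) atTop (𝓝 (log x / x)) := by
    refine (((continuousAt_log hx.ne').tendsto.comp hratio).div_const x).congr' ?_
    filter_upwards [eventually_gt_atTop 0] with t ht
    rw [Function.comp_apply, log_div (by positivity) (by positivity)]
  rw [integral_Ioi_of_hasDerivAt_of_tendsto' hderiv hint hlim]
  simp only [mul_zero, zero_add, log_one, zero_sub]
  ring

lemma hasDerivAt_integral_logSqKernel (hx : 0 < x) :
    HasDerivAt (fun y => ∫ t in Ioi 0, logSqKernel y t) (2 * log x / x) x := by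
  have hball : ∀ y ∈ Metric.ball x (x / 2), x / 2 < y ∧ y < x + x / 2 := fun y hy => by
    rw [Metric.mem_ball, dist_comm, Real.dist_eq, abs_lt] at hy
    constructor <;> linarith
  have hmeas_deriv : AEStronglyMeasurable (logSqKernelDeriv x) (volume.restrict (Ioi 0)) := by
    refine ContinuousOn.aestronglyMeasurable (fun t (ht : 0 < t) => ?_) measurableSet_Ioi
    refine ContinuousAt.continuousWithinAt ?_
    unfold logSqKernelDeriv
    fun_prop (disch := positivity)
  have hmeas : ∀ᶠ y in 𝓝 x, AEStronglyMeasurable (logSqKernel y) (volume.restrict (Ioi 0)) :=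
    eventually_of_mem (Ioi_mem_nhds hx) fun y hy =>
      (continuousOn_logSqKernel hy).aestronglyMeasurable measurableSet_Ioi
  have hbound : ∀ᵐ t ∂volume.restrict (Ioi 0), ∀ y ∈ Metric.ball x (x / 2),
      ‖logSqKernelDeriv y t‖ ≤
        ((x + x / 2) ^ 2 + 1) / (x / 2) ^ 2 * ((t + min (x / 2) (x / 2)⁻¹) ^ 2)⁻¹ := by
    filter_upwards [ae_restrict_mem measurableSet_Ioi] with t (ht : 0 < t) y hy
    exact abs_logSqKernelDeriv_le (half_pos hx) (hball y hy).1 (hball y hy).2 ht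
  have hdiff : ∀ᵐ t ∂volume.restrict (Ioi 0), ∀ y ∈ Metric.ball x (x / 2),
      HasDerivAt (logSqKernel · t) (logSqKernelDeriv y t) y := by
    filter_upwards [ae_restrict_mem measurableSet_Ioi] with t (ht : 0 < t) y hy
    exact hasDerivAt_logSqKernel (half_pos hx |>.trans (hball y hy).1) ht
  obtain ⟨hint, hderiv⟩ := hasDerivAt_integral_of_dominated_loc_of_deriv_le
    (Metric.ball_mem_nhds x (half_pos hx)) hmeas (integrableOn_logSqKernel hx) hmeas_deriv hbound
    ((integrableOn_inv_add_sq (lt_min (half_pos hx) (inv_pos.2 (half_pos hx)))).const_mul _) hdiff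
  rwa [integral_logSqKernelDeriv hx hint] at hderiv

lemma integral_logSqKernel (hx : 0 < x) : ∫ t in Ioi 0, logSqKernel x t = log x ^ 2 := by
  have hintegral : ∀ y ∈ Ioi (0 : ℝ),
      HasDerivAt (fun y => ∫ t in Ioi 0, logSqKernel y t) (2 * log y / y) y :=
    fun y hy => hasDerivAt_integral_logSqKernel hy
  have hlog : ∀ y ∈ Ioi (0 : ℝ), HasDerivAt (fun y => log y ^ 2) (2 * log y / y) y :=
    fun y (hy : 0 < y) => by
      simpa [div_eq_mul_inv, mul_assoc] using (hasDerivAt_log hy.ne').fun_pow 2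
  have hone : ∀ t, logSqKernel 1 t = 0 := fun t => by
    rw [logSqKernel, inv_one]
    ring
  refine isOpen_Ioi.eqOn_of_deriv_eq isPreconnected_Ioi
    (fun y hy => (hintegral y hy).differentiableAt.differentiableWithinAt)
    (fun y hy => (hlog y hy).differentiableAt.differentiableWithinAt)
    (fun y hy => (hintegral y hy).deriv.trans (hlog y hy).deriv.symm) (mem_Ioi.2 one_pos) ?_ hx
  simp [hone]

lemma sum_logSqKernel_eq {n : ℕ} {a : Fin n → ℝ} (ha : ∀ i, 0 < a i) (ht : 0 < t) :
    ∑ i, logSqKernel (a i) t =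
      (log (∏ i, (a i + t)) + log (∏ i, ((a i)⁻¹ + t)) - n * (2 * log (t + 1))) / t := by
  rw [log_prod fun i _ => (add_pos (ha i) ht).ne',
    log_prod fun i _ => (add_pos (inv_pos.2 (ha i)) ht).ne']
  simp only [logSqKernel, ← sum_div, sum_sub_distrib, sum_add_distrib, sum_const, card_univ,
    Fintype.card_fin, nsmul_eq_mul, add_comm t]

lemma sum_sq_log_le_of_prod_add_le {n : ℕ} {a b : Fin n → ℝ} (ha : ∀ i, 0 < a i)
    (hb : ∀ i, 0 < b i) (hab : ∀ t, 0 < t → ∏ i, (a i + t) ≤ ∏ i, (b i + t))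
    (hab_inv : ∀ t, 0 < t → ∏ i, ((a i)⁻¹ + t) ≤ ∏ i, ((b i)⁻¹ + t)) :
    ∑ i, log (a i) ^ 2 ≤ ∑ i, log (b i) ^ 2 := by
  have hint : ∀ x : Fin n → ℝ, (∀ i, 0 < x i) →
      Integrable (fun t => ∑ i, logSqKernel (x i) t) (volume.restrict (Ioi 0)) :=
    fun x hx => integrable_finsetSum _ fun i _ => integrableOn_logSqKernel (hx i)
  have hsum : ∀ x : Fin n → ℝ, (∀ i, 0 < x i) →
      ∑ i, log (x i) ^ 2 = ∫ t in Ioi 0, ∑ i, logSqKernel (x i) t := fun x hx => by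
    rw [integral_finsetSum _ fun i _ => integrableOn_logSqKernel (hx i)]
    exact sum_congr rfl fun i _ => (integral_logSqKernel (hx i)).symm
  rw [hsum a ha, hsum b hb]
  refine setIntegral_mono_on (hint a ha) (hint b hb) measurableSet_Ioi fun t (ht : 0 < t) => ?_
  rw [sum_logSqKernel_eq ha ht, sum_logSqKernel_eq hb ht]
  gcongr ?_ / _
  have h₁ := log_le_log (prod_pos fun i _ => add_pos (ha i) ht) (hab t ht)
  have h₂ := log_le_log (prod_pos fun i _ => add_pos (inv_pos.2 (ha i)) ht) (hab_inv t ht)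
  linarith

end LogSqKernel

/-- `δ_R(A,C)² = ∑ (log λᵢ(AC⁻¹))²`: the eigenvalues of `AC⁻¹` coincide with those of the
Hermitian matrix `C^{-1/2} A C^{-1/2}`, and the Frobenius norm of the matrix logarithm of a
Hermitian positive definite matrix equals the square root of the sum of squared logs of its
eigenvalues. -/
theorem stmt_13 (n : ℕ) (A B C : Matrix (Fin n) (Fin n) ℂ)
    (hA : A.PosDef) (hB : B.PosDef) (hC : C.PosDef)
    (hHA : ((hC.inv.posSemidef.sqrt) * A * (hC.inv.posSemidef.sqrt)).IsHermitian)
    (hHB : ((hC.inv.posSemidef.sqrt) * B * (hC.inv.posSemidef.sqrt)).IsHermitian)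
    (hE : ∀ k, 1 ≤ k → k ≤ n - 1 →
      esymm n k hHA.eigenvalues ≤ esymm n k hHB.eigenvalues)
    (hdet : (A * C⁻¹).det = (B * C⁻¹).det) :
    Real.sqrt (∑ i, (Real.log (hHA.eigenvalues i)) ^ 2) ≤
      Real.sqrt (∑ i, (Real.log (hHB.eigenvalues i)) ^ 2) := by
  have hApos : ∀ i, 0 < hHA.eigenvalues i := (hC.inv.posDef_sqrt_mul_mul_sqrt hA).eigenvalues_pos
  have hBpos : ∀ i, 0 < hHB.eigenvalues i := (hC.inv.posDef_sqrt_mul_mul_sqrt hB).eigenvalues_pos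
  have hprod : ∏ i, hHA.eigenvalues i = ∏ i, hHB.eigenvalues i := by
    have h := hHA.det_eq_prod_eigenvalues.symm.trans
      ((hC.inv.posSemidef.det_sqrt_mul_mul_sqrt A).trans <| hdet.trans <|
        (hC.inv.posSemidef.det_sqrt_mul_mul_sqrt B).symm.trans hHB.det_eq_prod_eigenvalues)
    exact_mod_cast h
  exact sqrt_le_sqrt <| sum_sq_log_le_of_prod_add_le hApos hBpos
    (fun _ ht => prod_add_le_prod_add_of_esymm_le hE hprod ht.le)
    (fun _ ht => prod_inv_add_le_prod_inv_add_of_esymm_le hApos hBpos hE hprod ht.le)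
end

section
/- Let X, Y be Hermitian positive definite matrices with unit trace and α ∈ (0,1) ∪ (1,2]. If e_k(λ(X)) ≤ e_k(λ(Y)) for k = 1,…,n, then the quantum Rényi entropy satisfies H_α(X) ≤ H_α(Y), where H_α(X) = (1/(1−α)) log(tr X^α). -/
/-!
Expanding `∏ (1 + t λᵢ) = ∑ tᵏ eₖ(λ)` shows that the hypothesis gives
`∑ log (1 + t λᵢ(X)) ≤ ∑ log (1 + t λᵢ(Y))` for every `t > 0`. Up to positive constants,
`z ^ α = ∫₀^∞ log (1 + t z) t^(-1-α) dt` for `0 < α < 1` and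
`z ^ α = ∫₀^∞ (t z - log (1 + t z)) t^(-1-α) dt` for `1 < α < 2`, so integrating the
logarithmic inequality against `t^(-1-α)` gives `tr X^α ≤ tr Y^α` in the first range and, since
`tr X = tr Y`, the reverse inequality in the second; `α = 2` follows by continuity in `α`.
The sign of `1 / (1 - α)` turns both into the claim.
-/

open Finset Real Matrix
open scoped ComplexOrder

/-- Quantum Rényi entropy of order `α` of a unit-trace positive definite matrix `X`,
expressed via its eigenvalues: `H_α(X) = (1/(1−α)) log (tr X^α)`, where
`tr X^α = ∑ i, λᵢ(X)^α`. -/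
noncomputable def quantumRenyi (n : ℕ) (α : ℝ) {X : Matrix (Fin n) (Fin n) ℂ}
    (hX : X.IsHermitian) : ℝ :=
  (1 / (1 - α)) * Real.log (∑ i, (hX.eigenvalues i) ^ α)

open MeasureTheory Set

lemma Matrix.IsHermitian.sum_eigenvalues_eq_one {ι : Type*} [Fintype ι] [DecidableEq ι]
    {A : Matrix ι ι ℂ} (hA : A.IsHermitian) (htr : A.trace = 1) :
    ∑ i, hA.eigenvalues i = 1 := by
  have h := hA.trace_eq_sum_eigenvalues
  rw [htr] at h
  exact_mod_cast congrArg Complex.re h.symm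

lemma prod_one_add_mul_eq_sum_esymm (n : ℕ) (t : ℝ) (x : Fin n → ℝ) :
    ∏ i, (1 + t * x i) = ∑ k ∈ range (n + 1), t ^ k * esymm n k x := by
  rw [prod_one_add, sum_powerset, card_univ, Fintype.card_fin]
  refine sum_congr rfl fun k _ => ?_
  rw [esymm, mul_sum]
  refine sum_congr rfl fun s hs => ?_
  rw [prod_mul_distrib, prod_const, (mem_powersetCard.mp hs).2]

lemma sum_log_one_add_mul_le_of_esymm_le {n : ℕ} {x y : Fin n → ℝ}
    (hx : ∀ i, 0 ≤ x i) (hy : ∀ i, 0 ≤ y i)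
    (hE : ∀ k, 1 ≤ k → k ≤ n → esymm n k x ≤ esymm n k y) {t : ℝ} (ht : 0 ≤ t) :
    ∑ i, log (1 + t * x i) ≤ ∑ i, log (1 + t * y i) := by
  have hx' : ∀ i, 0 < 1 + t * x i := fun i => by nlinarith [mul_nonneg ht (hx i)]
  have hy' : ∀ i, 0 < 1 + t * y i := fun i => by nlinarith [mul_nonneg ht (hy i)]
  rw [← log_prod fun i _ => (hx' i).ne', ← log_prod fun i _ => (hy' i).ne']
  refine log_le_log (prod_pos fun i _ => hx' i) ?_
  rw [prod_one_add_mul_eq_sum_esymm, prod_one_add_mul_eq_sum_esymm]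
  refine sum_le_sum fun k hk => ?_
  rcases Nat.eq_zero_or_pos k with rfl | hk0
  · simp [esymm]
  · exact mul_le_mul_of_nonneg_left (hE k hk0 (Nat.lt_succ_iff.mp (mem_range.mp hk)))
      (pow_nonneg ht k)

section Mellin

variable (f : ℝ → ℝ) (α : ℝ) {z : ℝ}

lemma comp_mul_mul_rpow_eq (hz : 0 < z) {t : ℝ} (ht : 0 < t) :
    f (t * z) * t ^ (-1 - α) = z ^ (1 + α) * (f (z * t) * (z * t) ^ (-1 - α)) := by
  have hzz : z ^ (1 + α) * z ^ (-1 - α) = 1 := by rw [← rpow_add hz]; norm_num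
  rw [mul_rpow hz.le ht.le, mul_comm z t]
  linear_combination (-(f (t * z) * t ^ (-1 - α))) * hzz

lemma integrableOn_comp_mul_mul_rpow_Ioi
    (hf : IntegrableOn (fun t => f t * t ^ (-1 - α)) (Set.Ioi 0)) (hz : 0 < z) :
    IntegrableOn (fun t => f (t * z) * t ^ (-1 - α)) (Set.Ioi 0) := by
  have hcomp : IntegrableOn (fun t => f (z * t) * (z * t) ^ (-1 - α)) (Set.Ioi 0) := by
    simpa using (integrableOn_Ioi_comp_mul_left_iff (fun t => f t * t ^ (-1 - α)) 0 hz).mpr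
      (by simpa using hf)
  exact IntegrableOn.congr_fun (hcomp.const_mul _)
    (fun t ht => (comp_mul_mul_rpow_eq f α hz ht).symm) measurableSet_Ioi

lemma integral_comp_mul_mul_rpow_Ioi (hz : 0 < z) :
    ∫ t in Set.Ioi 0, f (t * z) * t ^ (-1 - α) =
      z ^ α * ∫ t in Set.Ioi 0, f t * t ^ (-1 - α) := by
  rw [setIntegral_congr_fun measurableSet_Ioi fun t ht => comp_mul_mul_rpow_eq f α hz ht,
    integral_const_mul, integral_comp_mul_left_Ioi (fun t => f t * t ^ (-1 - α)) 0 hz, mul_zero,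
    smul_eq_mul, ← mul_assoc, ← rpow_neg_one, ← rpow_add hz]
  ring_nf

end Mellin

lemma integrableOn_mul_rpow_Ioi_of_le {f : ℝ → ℝ} {α p q C₀ C₁ : ℝ} (hf : Measurable f)
    (hp : α < p) (hq : q < α)
    (h₀ : ∀ t ∈ Set.Ioc 0 1, ‖f t‖ ≤ C₀ * t ^ p)
    (h₁ : ∀ t ∈ Set.Ioi 1, ‖f t‖ ≤ C₁ * t ^ q) :
    IntegrableOn (fun t => f t * t ^ (-1 - α)) (Set.Ioi 0) := by
  have hmeas : ∀ s, AEStronglyMeasurable (fun t => f t * t ^ (-1 - α)) (volume.restrict s) :=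
    fun s => (hf.mul (measurable_id.pow_const _)).aestronglyMeasurable
  have hbound : ∀ {C r t : ℝ}, 0 < t → ‖f t‖ ≤ C * t ^ r →
      ‖f t * t ^ (-1 - α)‖ ≤ C * t ^ (r - 1 - α) := fun {C r t} ht h => by
    rw [norm_mul, norm_of_nonneg (rpow_nonneg ht.le _), show r - 1 - α = r + (-1 - α) by ring,
      rpow_add ht, ← mul_assoc]
    exact mul_le_mul_of_nonneg_right h (rpow_nonneg ht.le _)
  rw [← Ioc_union_Ioi_eq_Ioi zero_le_one]
  refine IntegrableOn.union ?_ ?_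
  · have hint := (intervalIntegrable_iff_integrableOn_Ioc_of_le zero_le_one).mp
      (intervalIntegral.intervalIntegrable_rpow' (r := p - 1 - α) (by linarith))
    refine Integrable.mono' (hint.const_mul C₀) (hmeas _) ?_
    filter_upwards [ae_restrict_mem measurableSet_Ioc] with t ht
    exact hbound ht.1 (h₀ t ht)
  · have hint := integrableOn_Ioi_rpow_of_lt (a := q - 1 - α) (by linarith) zero_lt_one
    refine Integrable.mono' (hint.const_mul C₁) (hmeas _) ?_
    filter_upwards [ae_restrict_mem measurableSet_Ioi] with t ht
    exact hbound (zero_lt_one.trans ht) (h₁ t ht)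

lemma log_one_add_le_self {t : ℝ} (ht : 0 ≤ t) : log (1 + t) ≤ t := by
  linarith [log_le_sub_one_of_pos (show 0 < 1 + t by linarith)]

lemma integrableOn_log_one_add_mul_rpow_Ioi {α : ℝ} (hα : α ∈ Set.Ioo 0 1) :
    IntegrableOn (fun t => log (1 + t) * t ^ (-1 - α)) (Set.Ioi 0) := by
  have hε : 0 < α / 2 := by linarith [hα.1]
  refine integrableOn_mul_rpow_Ioi_of_le (by fun_prop) hα.2 (half_lt_self hα.1)
    (C₀ := 1) (C₁ := 2 ^ (α / 2) / (α / 2)) (fun t ht => ?_) (fun t ht => ?_)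
  · rw [norm_of_nonneg (log_nonneg (by linarith [ht.1])), one_mul, rpow_one]
    exact log_one_add_le_self ht.1.le
  · have ht : 1 < t := ht
    rw [norm_of_nonneg (log_nonneg (by linarith))]
    calc log (1 + t) ≤ (1 + t) ^ (α / 2) / (α / 2) := log_le_rpow_div (by linarith) hε
      _ ≤ (2 * t) ^ (α / 2) / (α / 2) := by gcongr; linarith
      _ = 2 ^ (α / 2) / (α / 2) * t ^ (α / 2) := by
          rw [mul_rpow zero_le_two (by linarith)]; ring

lemma integrableOn_sub_log_one_add_mul_rpow_Ioi {α : ℝ} (hα : α ∈ Set.Ioo 1 2) :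
    IntegrableOn (fun t => (t - log (1 + t)) * t ^ (-1 - α)) (Set.Ioi 0) := by
  refine integrableOn_mul_rpow_Ioi_of_le (by fun_prop) hα.2 hα.1 (C₀ := 1) (C₁ := 1)
    (fun t ht => ?_) (fun t ht => ?_)
  · have ht0 : 0 < t := ht.1
    rw [norm_of_nonneg (by linarith [log_one_add_le_self ht0.le]), one_mul, rpow_two]
    -- `1 - (1 + t)⁻¹ ≤ log (1 + t)` gives `t - log (1 + t) ≤ t ^ 2 / (1 + t)`
    have hlog := one_sub_inv_le_log_of_pos (show 0 < 1 + t by linarith)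
    have hinv : (1 + t)⁻¹ ≤ 1 - t + t ^ 2 := by
      rw [inv_le_iff_one_le_mul₀ (by linarith)]; nlinarith [sq_nonneg t]
    linarith
  · have ht0 : 0 < t := zero_lt_one.trans ht
    rw [norm_of_nonneg (by linarith [log_one_add_le_self ht0.le]), one_mul, rpow_one]
    linarith [log_nonneg (show 1 ≤ 1 + t by linarith)]

lemma setIntegral_Ioi_pos_of_pos {g : ℝ → ℝ} (hg : IntegrableOn g (Set.Ioi 0))
    (hpos : ∀ t, 0 < t → 0 < g t) : 0 < ∫ t in Set.Ioi 0, g t := by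
  rw [setIntegral_pos_iff_support_of_nonneg_ae ?_ hg]
  · refine lt_of_lt_of_le ?_
      (measure_mono (s := Set.Ioi 0) fun t ht => ⟨(hpos t ht).ne', ht⟩)
    simp
  · filter_upwards [ae_restrict_mem measurableSet_Ioi] with t ht
    exact (hpos t ht).le

lemma sum_rpow_le_of_sum_comp_mul_le {n : ℕ} {f : ℝ → ℝ} {α : ℝ}
    (hf : IntegrableOn (fun t => f t * t ^ (-1 - α)) (Set.Ioi 0))
    (hI : 0 < ∫ t in Set.Ioi 0, f t * t ^ (-1 - α))
    {x y : Fin n → ℝ} (hx : ∀ i, 0 < x i) (hy : ∀ i, 0 < y i)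
    (hxy : ∀ t, 0 < t → ∑ i, f (t * x i) ≤ ∑ i, f (t * y i)) :
    ∑ i, x i ^ α ≤ ∑ i, y i ^ α := by
  have hint : ∀ z, 0 < z → IntegrableOn (fun t => f (t * z) * t ^ (-1 - α)) (Set.Ioi 0) :=
    fun z hz => integrableOn_comp_mul_mul_rpow_Ioi f α hf hz
  have hrep : ∀ u : Fin n → ℝ, (∀ i, 0 < u i) →
      (∑ i, u i ^ α) * ∫ t in Set.Ioi 0, f t * t ^ (-1 - α) =
        ∫ t in Set.Ioi 0, ∑ i, f (t * u i) * t ^ (-1 - α) := fun u hu => by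
    rw [integral_finsetSum _ fun i _ => hint _ (hu i), sum_mul]
    exact sum_congr rfl fun i _ => (integral_comp_mul_mul_rpow_Ioi f α (hu i)).symm
  refine le_of_mul_le_mul_right ?_ hI
  rw [hrep x hx, hrep y hy]
  refine setIntegral_mono_on (integrable_finsetSum _ fun i _ => hint _ (hx i))
    (integrable_finsetSum _ fun i _ => hint _ (hy i)) measurableSet_Ioi fun t ht => ?_
  rw [← sum_mul, ← sum_mul]
  exact mul_le_mul_of_nonneg_right (hxy t ht) (rpow_nonneg (le_of_lt ht) _)

lemma sum_rpow_le_of_forall_mem_Ioo {n : ℕ} {x y : Fin n → ℝ} (hx : ∀ i, x i ≠ 0)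
    (hy : ∀ i, y i ≠ 0) {a b : ℝ} (hab : a < b)
    (h : ∀ β ∈ Set.Ioo a b, ∑ i, x i ^ β ≤ ∑ i, y i ^ β) :
    ∑ i, x i ^ b ≤ ∑ i, y i ^ b := by
  have hclosed : IsClosed {β : ℝ | ∑ i, x i ^ β ≤ ∑ i, y i ^ β} :=
    isClosed_le (continuous_finsetSum _ fun i _ => continuous_const_rpow (hx i))
      (continuous_finsetSum _ fun i _ => continuous_const_rpow (hy i))
  refine hclosed.closure_subset_iff.mpr h ?_
  rw [closure_Ioo hab.ne]
  exact right_mem_Icc.mpr hab.le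

lemma sum_rpow_le_of_lt_one {n : ℕ} {α : ℝ} (hα : α ∈ Set.Ioo 0 1)
    {x y : Fin n → ℝ} (hx : ∀ i, 0 < x i) (hy : ∀ i, 0 < y i)
    (hlog : ∀ t, 0 < t → ∑ i, log (1 + t * x i) ≤ ∑ i, log (1 + t * y i)) :
    ∑ i, x i ^ α ≤ ∑ i, y i ^ α :=
  sum_rpow_le_of_sum_comp_mul_le (f := fun s => log (1 + s))
    (integrableOn_log_one_add_mul_rpow_Ioi hα)
    (setIntegral_Ioi_pos_of_pos (integrableOn_log_one_add_mul_rpow_Ioi hα) fun t ht =>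
      mul_pos (log_pos (by linarith)) (rpow_pos_of_pos ht _))
    hx hy hlog

lemma sum_rpow_le_of_one_lt_of_lt_two {n : ℕ} {α : ℝ} (hα : α ∈ Set.Ioo 1 2)
    {x y : Fin n → ℝ} (hx : ∀ i, 0 < x i) (hy : ∀ i, 0 < y i)
    (hsum : ∑ i, x i = ∑ i, y i)
    (hlog : ∀ t, 0 < t → ∑ i, log (1 + t * x i) ≤ ∑ i, log (1 + t * y i)) :
    ∑ i, y i ^ α ≤ ∑ i, x i ^ α := by
  refine sum_rpow_le_of_sum_comp_mul_le (f := fun s => s - log (1 + s))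
    (integrableOn_sub_log_one_add_mul_rpow_Ioi hα)
    (setIntegral_Ioi_pos_of_pos (integrableOn_sub_log_one_add_mul_rpow_Ioi hα) fun t ht => ?_)
    hy hx fun t ht => ?_
  · have hlt : log (1 + t) < 1 + t - 1 :=
      log_lt_sub_one_of_pos (by linarith) (by linarith)
    exact mul_pos (by linarith) (rpow_pos_of_pos ht _)
  · simp only [sum_sub_distrib, ← mul_sum, hsum]
    linarith [hlog t ht]

lemma sum_rpow_le_of_one_lt {n : ℕ} {α : ℝ} (hα : α ∈ Set.Ioc 1 2)
    {x y : Fin n → ℝ} (hx : ∀ i, 0 < x i) (hy : ∀ i, 0 < y i)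
    (hsum : ∑ i, x i = ∑ i, y i)
    (hlog : ∀ t, 0 < t → ∑ i, log (1 + t * x i) ≤ ∑ i, log (1 + t * y i)) :
    ∑ i, y i ^ α ≤ ∑ i, x i ^ α := by
  rcases hα.2.lt_or_eq with hα2 | rfl
  · exact sum_rpow_le_of_one_lt_of_lt_two ⟨hα.1, hα2⟩ hx hy hsum hlog
  · exact sum_rpow_le_of_forall_mem_Ioo (fun i => (hy i).ne') (fun i => (hx i).ne') hα.1
      fun β hβ => sum_rpow_le_of_one_lt_of_lt_two hβ hx hy hsum hlog

theorem stmt_16 (n : ℕ) (X Y : Matrix (Fin n) (Fin n) ℂ)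
    (hX : X.PosDef) (hY : Y.PosDef)
    (hXtr : X.trace = 1) (hYtr : Y.trace = 1)
    (α : ℝ) (hα : α ∈ Set.Ioo (0 : ℝ) 1 ∪ Set.Ioc 1 2)
    (hE : ∀ k, 1 ≤ k → k ≤ n →
      esymm n k hX.1.eigenvalues ≤ esymm n k hY.1.eigenvalues) :
    quantumRenyi n α hX.1 ≤ quantumRenyi n α hY.1 := by
  have hx := hX.eigenvalues_pos
  have hy := hY.eigenvalues_pos
  have hxs := hX.1.sum_eigenvalues_eq_one hXtr
  have hys := hY.1.sum_eigenvalues_eq_one hYtr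
  have hlog : ∀ t, 0 < t → ∑ i, log (1 + t * hX.1.eigenvalues i)
      ≤ ∑ i, log (1 + t * hY.1.eigenvalues i) := fun t ht =>
    sum_log_one_add_mul_le_of_esymm_le (fun i => (hx i).le) (fun i => (hy i).le) hE ht.le
  have hne : (univ : Finset (Fin n)).Nonempty := nonempty_of_sum_ne_zero (hxs ▸ one_ne_zero)
  have hSx : 0 < ∑ i, hX.1.eigenvalues i ^ α :=
    sum_pos (fun i _ => rpow_pos_of_pos (hx i) _) hne
  have hSy : 0 < ∑ i, hY.1.eigenvalues i ^ α :=
    sum_pos (fun i _ => rpow_pos_of_pos (hy i) _) hne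
  rcases hα with hα | hα
  · exact mul_le_mul_of_nonneg_left (log_le_log hSx (sum_rpow_le_of_lt_one hα hx hy hlog))
      (one_div_nonneg.mpr (by linarith [hα.2]))
  · exact mul_le_mul_of_nonpos_left
      (log_le_log hSy (sum_rpow_le_of_one_lt hα hx hy (hxs.trans hys.symm) hlog))
      (one_div_nonpos.mpr (by linarith [hα.1]))
end
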